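/- Fix n > 0. For r ≥ 0 let W(r) be the 4×4 real symmetric matrix [[cosh r · I₂, −sinh r · Z],[−sinh r · Z, (2n + cosh r) · I₂]], with Z = diag(1,−1). Then the lowest PT symplectic eigenvalue ν(W(r)) tends to n as r → ∞. -/

import Mathlib

open Matrix
open scoped ComplexOrder

noncomputable section

/-- The 2×2 symplectic form `J = [[0,1],[-1,0]]`. -/
def J2 : Matrix (Fin 2) (Fin 2) ℝ := !![0, 1; -1, 0]

/-- `Z = diag(1,-1)`. -/
def Z2 : Matrix (Fin 2) (Fin 2) ℝ := !![1, 0; 0, -1]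

/-- The 4×4 symplectic form `Ω = diag(J, J)`. -/
def Ω4 : Matrix (Fin 2 ⊕ Fin 2) (Fin 2 ⊕ Fin 2) ℝ := fromBlocks J2 0 0 J2

/-- `V` is a physical covariance matrix of a two-mode Gaussian state: `V + iΩ` is
positive semidefinite. -/
def IsPhysCM (V : Matrix (Fin 2 ⊕ Fin 2) (Fin 2 ⊕ Fin 2) ℝ) : Prop :=
  (V.map Complex.ofReal + Complex.I • Ω4.map Complex.ofReal).PosSemidef

/-- Noise matrix `N(V) = Z A Z + Z C + Cᵀ Z + B` of a two-mode covariance matrix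
`V = [[A, C], [Cᵀ, B]]`. -/
def noiseN (V : Matrix (Fin 2 ⊕ Fin 2) (Fin 2 ⊕ Fin 2) ℝ) : Matrix (Fin 2) (Fin 2) ℝ :=
  Z2 * V.toBlocks₁₁ * Z2 + Z2 * V.toBlocks₁₂ + (V.toBlocks₁₂)ᵀ * Z2 + V.toBlocks₂₂

/-- Coherent-state teleportation fidelity `F(V) = 2 / √(det (2 I₂ + N(V)))`. -/
def fid (V : Matrix (Fin 2 ⊕ Fin 2) (Fin 2 ⊕ Fin 2) ℝ) : ℝ :=
  2 / Real.sqrt (((2 : ℝ) • (1 : Matrix (Fin 2) (Fin 2) ℝ) + noiseN V).det)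

/-- `Σ(V) = det A + det B - 2 det C`. -/
def SigmaPT (V : Matrix (Fin 2 ⊕ Fin 2) (Fin 2 ⊕ Fin 2) ℝ) : ℝ :=
  (V.toBlocks₁₁).det + (V.toBlocks₂₂).det - 2 * (V.toBlocks₁₂).det

/-- The lowest partially-transposed symplectic eigenvalue
`ν(V) = √((Σ − √(Σ² − 4 det V))/2)`. -/
def nuPT (V : Matrix (Fin 2 ⊕ Fin 2) (Fin 2 ⊕ Fin 2) ℝ) : ℝ :=
  Real.sqrt ((SigmaPT V - Real.sqrt ((SigmaPT V) ^ 2 - 4 * V.det)) / 2)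

/-- The covariance matrix shared by Alice and Bob after entanglement swapping
through a channel adding noise `2n·I₂`, using a two-mode squeezed state with
squeezing parameter `r`. -/
def Wswap (n r : ℝ) : Matrix (Fin 2 ⊕ Fin 2) (Fin 2 ⊕ Fin 2) ℝ :=
  fromBlocks (Real.cosh r • (1 : Matrix (Fin 2) (Fin 2) ℝ)) (-(Real.sinh r) • Z2)
    (-(Real.sinh r) • Z2) ((2 * n + Real.cosh r) • (1 : Matrix (Fin 2) (Fin 2) ℝ))

/-!
With `c = cosh r`, one has `Σ(W) = 4c² + 4nc + 4n² − 2` and `det W = (1 + 2nc)²`, so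
`Σ² − 4 det W = 16 (c + n)² (c² + n² − 1)` and the nested radicals collapse to
`ν(W(r)) = c + n − √(c² + n² − 1) = n + (1 − n²) / (c + √(c² + n² − 1))`, which tends to `n`
as `c → ∞`.
-/

open Filter Topology

lemma Z2_mul_Z2 : Z2 * Z2 = 1 := by
  ext i j
  fin_cases i <;> fin_cases j <;> simp [Z2]

lemma det_Z2 : Z2.det = -1 := by
  simp [Z2, Matrix.det_fin_two_of]

lemma det_fromBlocks_smul_one {ι K : Type*} [Fintype ι] [DecidableEq ι] [Field K]
    (a b : K) (ha : a ≠ 0) (B C : Matrix ι ι K) :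
    (fromBlocks (a • 1) B C (b • 1)).det = ((a * b) • 1 - C * B).det := by
  let : Invertible (a • (1 : Matrix ι ι K)) := invertibleOfIsUnitDet _ (by simp [ha])
  have hinv : ⅟ (a • (1 : Matrix ι ι K)) = a⁻¹ • 1 :=
    invOf_eq_right_inv (by rw [smul_mul_smul_comm, mul_inv_cancel₀ ha, one_mul, one_smul])
  rw [det_fromBlocks₁₁, hinv, ← det_mul]
  simp [smul_sub, smul_smul, ha]

lemma det_Wswap (n r : ℝ) : (Wswap n r).det = (1 + 2 * n * Real.cosh r) ^ 2 := by
  rw [Wswap, det_fromBlocks_smul_one _ _ (Real.cosh_pos r).ne', smul_mul_smul_comm, Z2_mul_Z2,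
    ← sub_smul, det_smul, det_one, Fintype.card_fin, mul_one]
  linear_combination
    (Real.cosh r ^ 2 - Real.sinh r ^ 2 + 1 + 4 * n * Real.cosh r) * Real.cosh_sq_sub_sinh_sq r

lemma sigmaPT_Wswap (n r : ℝ) :
    SigmaPT (Wswap n r) = 4 * Real.cosh r ^ 2 + 4 * n * Real.cosh r + 4 * n ^ 2 - 2 := by
  rw [SigmaPT, Wswap, toBlocks_fromBlocks₁₁, toBlocks_fromBlocks₂₂, toBlocks_fromBlocks₁₂,
    det_smul, det_smul, det_smul, det_Z2, det_one, Fintype.card_fin]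
  linear_combination (-2) * Real.cosh_sq_sub_sinh_sq r

lemma nuPT_Wswap (n r : ℝ) (hn : 0 ≤ n) :
    nuPT (Wswap n r) = Real.cosh r + n - √(Real.cosh r ^ 2 + n ^ 2 - 1) := by
  set c := Real.cosh r
  have hc : 1 ≤ c := Real.one_le_cosh r
  set u := √(c ^ 2 + n ^ 2 - 1)
  have hu_sq : u ^ 2 = c ^ 2 + n ^ 2 - 1 := Real.sq_sqrt (by nlinarith)
  have hu_le : u ≤ c + n := Real.sqrt_le_iff.mpr ⟨by linarith, by nlinarith⟩
  have hdisc : (4 * c ^ 2 + 4 * n * c + 4 * n ^ 2 - 2) ^ 2 - 4 * (1 + 2 * n * c) ^ 2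
      = (4 * (c + n)) ^ 2 * (c ^ 2 + n ^ 2 - 1) := by ring
  rw [nuPT, sigmaPT_Wswap, det_Wswap, hdisc, Real.sqrt_mul (sq_nonneg _),
    Real.sqrt_sq (by linarith)]
  have hhalf :
      (4 * c ^ 2 + 4 * n * c + 4 * n ^ 2 - 2 - 4 * (c + n) * u) / 2 = (c + n - u) ^ 2 := by
    linear_combination (-1) * hu_sq
  rw [hhalf, Real.sqrt_sq (by linarith)]

lemma Real.tendsto_cosh_atTop : Tendsto Real.cosh atTop atTop :=
  tendsto_atTop_mono (fun x => by rw [Real.cosh_eq]; linarith [Real.exp_pos (-x)])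
    (Real.tendsto_exp_atTop.atTop_div_const two_pos)

lemma tendsto_sub_sqrt_sq_add_atTop (k : ℝ) :
    Tendsto (fun x : ℝ => x - √(x ^ 2 + k)) atTop (𝓝 0) := by
  have hden : Tendsto (fun x : ℝ => x + √(x ^ 2 + k)) atTop atTop :=
    tendsto_id.atTop_add_nonneg fun _ => Real.sqrt_nonneg _
  refine ((tendsto_const_nhds (x := -k)).div_atTop hden).congr' ?_
  filter_upwards [eventually_ge_atTop (|k| + 1)] with x hx
  have hk : 0 ≤ x ^ 2 + k := by nlinarith [neg_abs_le k, abs_nonneg k]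
  have hden_pos : 0 < x + √(x ^ 2 + k) := by
    linarith [abs_nonneg k, Real.sqrt_nonneg (x ^ 2 + k)]
  rw [div_eq_iff hden_pos.ne']
  linear_combination Real.sq_sqrt hk

theorem swap_nu_tendsto (n : ℝ) (hn : 0 < n) :
    Filter.Tendsto (fun r : ℝ => nuPT (Wswap n r)) Filter.atTop (nhds n) := by
  simp only [nuPT_Wswap n _ hn.le]
  have h := ((tendsto_sub_sqrt_sq_add_atTop (n ^ 2 - 1)).const_add n).comp
    Real.tendsto_cosh_atTop
  rw [add_zero] at h
  exact h.congr fun r => by dsimp; ring_nf
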